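/- Let p, q ∈ ℝ^m be probability distributions with q of full rank, let a ∈ (0, m·min_i q_i), set a_i := a/m, and let q_{AB} be the corresponding bipartite extension of q with parameter n ∈ ℕ. Define Δ̃_n^{(α)} := H_α(q_{AB}) − H_α(q_B) − H_α(p) (for α < 0 assume additionally that p has full rank). Then, as a function of n ∈ ℕ: Δ̃_n^{(α)} is increasing in n for every finite real α < 1 with α ≠ 0; Δ̃_n^{(α)} is constant in n for α = 1; and Δ̃_n^{(α)} is decreasing in n for every finite real α > 1. -/

import Mathlib

open scoped BigOperators

/-- `p` is a probability distribution on the finite type `ι`. -/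
def IsProbDist {ι : Type*} [Fintype ι] (p : ι → ℝ) : Prop :=
  (∀ i, 0 ≤ p i) ∧ ∑ i, p i = 1

/-- `p` is a probability distribution with strictly positive entries. -/
def IsPosProbDist {ι : Type*} [Fintype ι] (p : ι → ℝ) : Prop :=
  (∀ i, 0 < p i) ∧ ∑ i, p i = 1

/-- `p` majorizes `q`: for every `k`, the sum of the `k` largest entries of `p` is at least
the sum of the `k` largest entries of `q`.  For nonnegative vectors this is equivalent to:
for every set `A` of indices of `q` there is a set `B` of indices of `p` with `|B| ≤ |A|`
whose `p`-sum dominates the `q`-sum over `A`. -/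
def Majorizes {ι κ : Type*} [Fintype ι] [Fintype κ] (p : ι → ℝ) (q : κ → ℝ) : Prop :=
  ∀ A : Finset κ, ∃ B : Finset ι, B.card ≤ A.card ∧ ∑ j ∈ A, q j ≤ ∑ i ∈ B, p i

/-- Kronecker (tensor) product of two vectors. -/
def kron {ι κ : Type*} (p : ι → ℝ) (q : κ → ℝ) : ι × κ → ℝ :=
  fun x => p x.1 * q x.2

/-- Shannon entropy (natural logarithm; note `Real.log 0 = 0`, so `0 log 0 = 0`). -/
noncomputable def shannonEntropy {ι : Type*} [Fintype ι] (p : ι → ℝ) : ℝ :=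
  -∑ i, p i * Real.log (p i)

open Classical in
/-- The number of nonzero entries of `p`. -/
noncomputable def distRank {ι : Type*} [Fintype ι] (p : ι → ℝ) : ℕ :=
  (Finset.univ.filter fun i => p i ≠ 0).card

/-- Marginal of a `k`-partite distribution on its `i`-th factor. -/
noncomputable def marginal {k : ℕ} {d : Fin k → ℕ} (r : (∀ i, Fin (d i)) → ℝ) (i : Fin k) :
    Fin (d i) → ℝ :=
  fun b => ∑ y : ∀ j, Fin (d j), if y i = b then r y else 0

open Classical in
/-- Rényi entropy of order `α` (with `H₁` being the Shannon entropy). -/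
noncomputable def renyi {ι : Type*} [Fintype ι] (α : ℝ) (p : ι → ℝ) : ℝ :=
  if α = 1 then shannonEntropy p
  else (Real.sign α / (1 - α)) * Real.log (∑ i, p i ^ α)

/-- Min-entropy `H_∞(p) = -log (max_i p_i)`. -/
noncomputable def renyiInf {ι : Type*} [Fintype ι] (p : ι → ℝ) : ℝ :=
  -Real.log (⨆ i, p i)

/-- Burg entropy `H_Burg(p) = (1/m) ∑ log p_i`. -/
noncomputable def burg {ι : Type*} [Fintype ι] (p : ι → ℝ) : ℝ :=
  (1 / (Fintype.card ι : ℝ)) * ∑ i, Real.log (p i)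

open Classical in
/-- Rényi entropy as an extended real: it is `-∞` for `α < 0` when `p` has a zero entry. -/
noncomputable def renyiE {ι : Type*} [Fintype ι] (α : ℝ) (p : ι → ℝ) : EReal :=
  if α < 0 ∧ ∃ i, p i = 0 then ⊥ else (renyi α p : EReal)

open Classical in
/-- Burg entropy as an extended real: it is `-∞` when `p` has a zero entry. -/
noncomputable def burgE {ι : Type*} [Fintype ι] (p : ι → ℝ) : EReal :=
  if ∃ i, p i = 0 then ⊥ else (burg p : EReal)

/-- `p` trumps `q`: there is a catalyst distribution `r` with `p ⊗ r ≻ q ⊗ r`. -/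
def Trumps {ι κ : Type*} [Fintype ι] [Fintype κ] (p : ι → ℝ) (q : κ → ℝ) : Prop :=
  ∃ (n : ℕ) (r : Fin n → ℝ), IsProbDist r ∧ Majorizes (kron p r) (kron q r)

/-- The bipartite extension `q_{AB}` of `q` with parameters `a i ∈ [0, q i]` and `n`:
the `m × (n+1)` matrix whose first column is `(q i - a i)` and whose remaining `n`
columns all equal `(a i / n)`. -/
noncomputable def qAB {m : ℕ} (q a : Fin m → ℝ) (n : ℕ) : Fin m × Fin (n + 1) → ℝ :=
  fun x => if x.2 = 0 then q x.1 - a x.1 else a x.1 / n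

/-- The `B`-marginal `(1 - a, a/n, …, a/n)` of `qAB`, where `a = ∑ i, a i`. -/
noncomputable def qBext {m : ℕ} (a : Fin m → ℝ) (n : ℕ) : Fin (n + 1) → ℝ :=
  fun j => if j = 0 then 1 - ∑ i, a i else (∑ i, a i) / n

/-- Symmetry of an entropy-like functional on positive distributions. -/
def SymmetricS (S : ∀ n : ℕ, (Fin n → ℝ) → ℝ) : Prop :=
  ∀ (n : ℕ) (p : Fin n → ℝ), IsPosProbDist p →
    ∀ σ : Equiv.Perm (Fin n), S n (p ∘ σ) = S n p

/-- Additivity: `S(p ⊗ q) = S(p) + S(q)`. -/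
def AdditiveS (S : ∀ n : ℕ, (Fin n → ℝ) → ℝ) : Prop :=
  ∀ (m n : ℕ) (p : Fin m → ℝ) (q : Fin n → ℝ), IsPosProbDist p → IsPosProbDist q →
    S (m * n) (fun x => kron p q (finProdFinEquiv.symm x)) = S m p + S n q

/-- Subadditivity: `S(p_{AB}) ≤ S(p_A ⊗ p_B)` for bipartite distributions. -/
def SubadditiveS (S : ∀ n : ℕ, (Fin n → ℝ) → ℝ) : Prop :=
  ∀ (m n : ℕ) (P : Fin m × Fin n → ℝ), IsPosProbDist P →
    S (m * n) (fun x => P (finProdFinEquiv.symm x)) ≤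
      S (m * n) (fun x =>
        kron (fun i => ∑ j, P (i, j)) (fun j => ∑ i, P (i, j)) (finProdFinEquiv.symm x))

/-- Continuity of `S` on each simplex of positive distributions. -/
def ContinuousS (S : ∀ n : ℕ, (Fin n → ℝ) → ℝ) : Prop :=
  ∀ n : ℕ, ContinuousOn (S n) {p : Fin n → ℝ | IsPosProbDist p}

/-- The quantity `Δ̃_n^{(α)} = H_α(q_{AB}) - H_α(q_B) - H_α(p)` for `a_i := a/m`. -/
noncomputable def deltaTilde {m : ℕ} (p q : Fin m → ℝ) (a α : ℝ) (n : ℕ) : ℝ :=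
  renyi α (qAB q (fun _ => a / (m : ℝ)) n) -
    renyi α (qBext (fun _ : Fin m => a / (m : ℝ)) n) - renyi α p

/-!
With `c = a / m` and `t = n ^ (1 - α)` the power sums are affine in `t`:
`∑ q_{AB}^α = ∑ (q i - c)^α + m c^α t` and `∑ q_B^α = (1 - a)^α + a^α t`. Hence for `α ≠ 1`,
`Δ̃_n = sign α / (1 - α) · log ((C + C₂ t) / (D + D₂ t)) - H_α(p)`, and such a ratio is monotone
in `t` in the direction of the sign of `C₂ D - C D₂`. Jensen's inequality for `x ↦ x^α` (concave
for `0 < α < 1`, convex otherwise) fixes that sign so that, together with the sign of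
`sign α / (1 - α)`, `Δ̃` always increases with `t`; and `t` increases with `n` exactly when
`α < 1`. For `α = 1` both Shannon entropies grow by exactly `a log n`.
-/

open Real Finset Set

lemma convexOn_rpow_of_nonpos {p : ℝ} (hp : p ≤ 0) : ConvexOn ℝ (Ioi 0) fun x : ℝ ↦ x ^ p := by
  have himage : log '' Ioi 0 = univ :=
    eq_univ_of_forall fun y ↦ ⟨exp y, exp_pos y, log_exp y⟩
  have hexp : ConvexOn ℝ (log '' Ioi 0) fun y : ℝ ↦ exp (p * y) := by
    rw [himage]
    exact convexOn_exp.comp_linearMap (LinearMap.mul ℝ ℝ p)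
  have hanti : AntitoneOn (fun y : ℝ ↦ exp (p * y)) (log '' Ioi 0) :=
    fun _ _ _ _ hxy ↦ exp_le_exp.2 (mul_le_mul_of_nonpos_left hxy hp)
  refine (hexp.comp_concaveOn strictConcaveOn_log_Ioi.concaveOn hanti).congr fun x hx ↦ ?_
  simp [rpow_def_of_pos (mem_Ioi.1 hx), mul_comm]

section Jensen

variable {ι : Type*} [Fintype ι] [Nonempty ι] {s : Set ℝ} {f : ℝ → ℝ} {x : ι → ℝ}

lemma ConvexOn.card_mul_map_mean_le_sum (hf : ConvexOn ℝ s f) (hx : ∀ i, x i ∈ s) :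
    Fintype.card ι * f ((∑ i, x i) / Fintype.card ι) ≤ ∑ i, f (x i) := by
  have hcard : (0 : ℝ) < Fintype.card ι := by exact_mod_cast Fintype.card_pos
  have h := hf.map_sum_le (t := univ) (w := fun _ ↦ (Fintype.card ι : ℝ)⁻¹) (p := x)
    (fun _ _ ↦ by positivity) (by simp [hcard.ne']) (fun i _ ↦ hx i)
  simp only [smul_eq_mul, inv_mul_eq_div, ← sum_div] at h
  calc _ ≤ Fintype.card ι * ((∑ i, f (x i)) / Fintype.card ι) := by gcongr
    _ = ∑ i, f (x i) := by field_simp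

lemma ConcaveOn.sum_le_card_mul_map_mean (hf : ConcaveOn ℝ s f) (hx : ∀ i, x i ∈ s) :
    ∑ i, f (x i) ≤ Fintype.card ι * f ((∑ i, x i) / Fintype.card ι) := by
  have h := hf.neg.card_mul_map_mean_le_sum hx
  simp only [Pi.neg_apply, sum_neg_distrib, mul_neg] at h
  linarith

end Jensen

lemma monotoneOn_log_add_mul_sub_log_add_mul {C C₂ D D₂ : ℝ} (hC : 0 < C) (hC₂ : 0 ≤ C₂)
    (hD : 0 < D) (hD₂ : 0 ≤ D₂) (h : C * D₂ ≤ C₂ * D) :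
    MonotoneOn (fun t ↦ log (C + C₂ * t) - log (D + D₂ * t)) (Ici 0) := by
  intro s (hs : 0 ≤ s) t (ht : 0 ≤ t) hst
  rw [sub_le_sub_iff, ← log_mul (by positivity) (by positivity),
    ← log_mul (by positivity) (by positivity)]
  apply log_le_log (by positivity)
  nlinarith [mul_le_mul_of_nonneg_left h (sub_nonneg.2 hst)]

lemma antitoneOn_log_add_mul_sub_log_add_mul {C C₂ D D₂ : ℝ} (hC : 0 < C) (hC₂ : 0 ≤ C₂)
    (hD : 0 < D) (hD₂ : 0 ≤ D₂) (h : D * C₂ ≤ D₂ * C) :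
    AntitoneOn (fun t ↦ log (C + C₂ * t) - log (D + D₂ * t)) (Ici 0) := by
  intro s hs t ht hst
  have := monotoneOn_log_add_mul_sub_log_add_mul hD hD₂ hC hC₂ h hs ht hst
  dsimp only at this ⊢
  linarith

lemma sum_fin_succ_ite_zero (u v : ℝ) (n : ℕ) :
    ∑ j : Fin (n + 1), (if j = 0 then u else v) = u + n * v := by
  simp [Fin.sum_univ_succ, Fin.succ_ne_zero]

lemma mul_div_rpow_eq_rpow_mul_rpow_one_sub {x t : ℝ} (α : ℝ) (hx : 0 ≤ x) (ht : 0 < t) :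
    t * (x / t) ^ α = x ^ α * t ^ (1 - α) := by
  rw [div_rpow hx ht.le, rpow_sub ht, rpow_one]
  field_simp

lemma mul_negMulLog_div (x : ℝ) {t : ℝ} (ht : 0 < t) :
    t * negMulLog (x / t) = negMulLog x + x * log t := by
  rw [div_eq_mul_inv, negMulLog_mul]
  simp only [negMulLog_def, log_inv]
  field_simp

lemma shannonEntropy_eq_sum_negMulLog {ι : Type*} [Fintype ι] (p : ι → ℝ) :
    shannonEntropy p = ∑ i, negMulLog (p i) := by
  simp [shannonEntropy, negMulLog, sum_neg_distrib]

section Extension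

variable {m : ℕ} (q a : Fin m → ℝ) {n : ℕ}

lemma sum_rpow_qAB (α : ℝ) (ha : ∀ i, 0 ≤ a i) (hn : n ≠ 0) :
    ∑ x, qAB q a n x ^ α = ∑ i, (q i - a i) ^ α + (∑ i, a i ^ α) * (n : ℝ) ^ (1 - α) := by
  have hn' : (0 : ℝ) < n := by positivity
  simp only [Fintype.sum_prod_type, qAB, apply_ite (· ^ α), sum_fin_succ_ite_zero,
    mul_div_rpow_eq_rpow_mul_rpow_one_sub α (ha _) hn', sum_add_distrib, sum_mul]

lemma sum_rpow_qBext (α : ℝ) (ha : 0 ≤ ∑ i, a i) (hn : n ≠ 0) :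
    ∑ j, qBext a n j ^ α = (1 - ∑ i, a i) ^ α + (∑ i, a i) ^ α * (n : ℝ) ^ (1 - α) := by
  have hn' : (0 : ℝ) < n := by positivity
  simp only [qBext, apply_ite (· ^ α), sum_fin_succ_ite_zero,
    mul_div_rpow_eq_rpow_mul_rpow_one_sub α ha hn']

lemma shannonEntropy_qAB (hn : n ≠ 0) :
    shannonEntropy (qAB q a n) =
      ∑ i, negMulLog (q i - a i) + ∑ i, negMulLog (a i) + (∑ i, a i) * log n := by
  have hn' : (0 : ℝ) < n := by positivity
  simp only [shannonEntropy_eq_sum_negMulLog, Fintype.sum_prod_type, qAB, apply_ite negMulLog,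
    sum_fin_succ_ite_zero, mul_negMulLog_div _ hn', sum_add_distrib, sum_mul, add_assoc]

lemma shannonEntropy_qBext (hn : n ≠ 0) :
    shannonEntropy (qBext a n) =
      negMulLog (1 - ∑ i, a i) + negMulLog (∑ i, a i) + (∑ i, a i) * log n := by
  have hn' : (0 : ℝ) < n := by positivity
  simp only [shannonEntropy_eq_sum_negMulLog, qBext, apply_ite negMulLog,
    sum_fin_succ_ite_zero, mul_negMulLog_div _ hn', add_assoc]

end Extension

lemma deltaTilde_one_eq {m : ℕ} (p q : Fin m → ℝ) (a : ℝ) {n : ℕ} (hn : n ≠ 0) :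
    deltaTilde p q a 1 n = deltaTilde p q a 1 1 := by
  simp only [deltaTilde, renyi, if_true, shannonEntropy_qAB _ _ hn, shannonEntropy_qBext _ hn,
    shannonEntropy_qAB _ _ one_ne_zero, shannonEntropy_qBext _ one_ne_zero, Nat.cast_one, log_one]
  ring

/-- `H_α(q_{AB}) - H_α(q_B)` for `α ≠ 1`, as a function of `t = n ^ (1 - α)`. -/
noncomputable def renyiGap {m : ℕ} (q a : Fin m → ℝ) (α t : ℝ) : ℝ :=
  sign α / (1 - α) * (log (∑ i, (q i - a i) ^ α + (∑ i, a i ^ α) * t) -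
    log ((1 - ∑ i, a i) ^ α + (∑ i, a i) ^ α * t))

lemma renyi_qAB_sub_renyi_qBext {m : ℕ} (q a : Fin m → ℝ) {α : ℝ} {n : ℕ} (hα : α ≠ 1)
    (ha : ∀ i, 0 ≤ a i) (hn : n ≠ 0) :
    renyi α (qAB q a n) - renyi α (qBext a n) = renyiGap q a α ((n : ℝ) ^ (1 - α)) := by
  simp only [renyi, if_neg hα, sum_rpow_qAB q a α ha hn,
    sum_rpow_qBext a α (sum_nonneg fun i _ ↦ ha i) hn, renyiGap]
  ring

lemma deltaTilde_eq_renyiGap {m : ℕ} (p q : Fin m → ℝ) {a α : ℝ} {n : ℕ} (hα : α ≠ 1)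
    (ha : 0 ≤ a) (hn : n ≠ 0) :
    deltaTilde p q a α n = renyiGap q (fun _ ↦ a / m) α ((n : ℝ) ^ (1 - α)) - renyi α p := by
  rw [deltaTilde, renyi_qAB_sub_renyi_qBext q _ hα (fun _ ↦ by positivity) hn]

lemma sign_div_one_sub_pos {α : ℝ} (h₀ : 0 < α) (h₁ : α < 1) : 0 < sign α / (1 - α) := by
  rw [sign_of_pos h₀]
  exact div_pos one_pos (by linarith)

lemma sign_div_one_sub_neg {α : ℝ} (h : α < 0 ∨ 1 < α) : sign α / (1 - α) < 0 := by
  rcases h with h | h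
  · rw [sign_of_neg h]
    exact div_neg_of_neg_of_pos (by norm_num) (by linarith)
  · rw [sign_of_pos (by linarith)]
    exact div_neg_of_pos_of_neg one_pos (by linarith)

lemma convexOn_rpow_Ioi {α : ℝ} (h : α ≤ 0 ∨ 1 ≤ α) : ConvexOn ℝ (Ioi 0) fun x : ℝ ↦ x ^ α := by
  rcases h with h | h
  · exact convexOn_rpow_of_nonpos h
  · exact (convexOn_rpow h).subset Ioi_subset_Ici_self (convex_Ioi 0)

lemma pos_of_sum_fin_eq_one {m : ℕ} {q : Fin m → ℝ} (hq : ∑ i, q i = 1) : 0 < m :=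
  Nat.pos_of_ne_zero fun h ↦ by subst h; simp at hq

lemma monotoneOn_renyiGap {m : ℕ} {q : Fin m → ℝ} {c α : ℝ} (hq : ∑ i, q i = 1) (hc : 0 < c)
    (hqc : ∀ i, c < q i) (hα₀ : α ≠ 0) (hα₁ : α ≠ 1) :
    MonotoneOn (renyiGap q (fun _ ↦ c) α) (Ici 0) := by
  have hm := pos_of_sum_fin_eq_one hq
  have : Nonempty (Fin m) := ⟨⟨0, hm⟩⟩
  have hx : ∀ i, 0 < q i - c := fun i ↦ sub_pos.2 (hqc i)
  have hsum : ∑ i, (q i - c) = 1 - m * c := by simp [sum_sub_distrib, hq]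
  have hmass : 0 < 1 - m * c := hsum ▸ sum_pos (fun i _ ↦ hx i) univ_nonempty
  unfold renyiGap
  simp only [sum_const, card_univ, Fintype.card_fin, nsmul_eq_mul]
  have hC : 0 < ∑ i, (q i - c) ^ α := sum_pos (fun i _ ↦ rpow_pos_of_pos (hx i) α) univ_nonempty
  have hC₂ : 0 ≤ m * c ^ α := by positivity
  have hD : 0 < (1 - m * c) ^ α := rpow_pos_of_pos hmass α
  have hD₂ : 0 ≤ (m * c) ^ α := by positivity
  -- Jensen compares `∑ (q i - c) ^ α` with `m ((1 - m c) / m) ^ α`; multiplied by `(m c) ^ α`,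
  -- the latter is the cross term `m c ^ α (1 - m c) ^ α` that decides the monotonicity.
  have hcross : m * c ^ α * (1 - m * c) ^ α = m * ((1 - m * c) / m) ^ α * (m * c) ^ α := by
    have hmα : (m : ℝ) ^ α ≠ 0 := by positivity
    rw [div_rpow hmass.le (by positivity), mul_rpow (by positivity) hc.le]
    field_simp
  obtain hα | hα : (0 < α ∧ α < 1) ∨ (α < 0 ∨ 1 < α) := by
    rcases lt_or_gt_of_ne hα₀ with h | h <;> rcases lt_or_gt_of_ne hα₁ with h' | h' <;> tauto
  · have hJ := (concaveOn_rpow hα.1.le hα.2.le).sum_le_card_mul_map_mean (fun i ↦ (hx i).le)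
    rw [Fintype.card_fin, hsum] at hJ
    have hF := monotoneOn_log_add_mul_sub_log_add_mul hC hC₂ hD hD₂
      (by linarith [mul_le_mul_of_nonneg_right hJ hD₂])
    exact fun s hs t ht hst ↦
      mul_le_mul_of_nonneg_left (hF hs ht hst) (sign_div_one_sub_pos hα.1 hα.2).le
  · have hJ := (convexOn_rpow_Ioi (hα.imp le_of_lt le_of_lt)).card_mul_map_mean_le_sum
      (fun i ↦ mem_Ioi.2 (hx i))
    rw [Fintype.card_fin, hsum] at hJ
    have hF := antitoneOn_log_add_mul_sub_log_add_mul hC hC₂ hD hD₂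
      (by linarith [mul_le_mul_of_nonneg_right hJ hD₂])
    exact fun s hs t ht hst ↦
      mul_le_mul_of_nonpos_left (hF hs ht hst) (sign_div_one_sub_neg hα).le

lemma deltaTilde_le_deltaTilde_of_rpow_le {m : ℕ} (p : Fin m → ℝ) {q : Fin m → ℝ} {a α : ℝ}
    (hq : ∑ i, q i = 1) (ha : 0 < a) (hqc : ∀ i, a / m < q i) (hα₀ : α ≠ 0) (hα₁ : α ≠ 1)
    {n k : ℕ} (hn : n ≠ 0) (hk : k ≠ 0) (hnk : (n : ℝ) ^ (1 - α) ≤ (k : ℝ) ^ (1 - α)) :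
    deltaTilde p q a α n ≤ deltaTilde p q a α k := by
  have hc : 0 < a / m := div_pos ha (by exact_mod_cast pos_of_sum_fin_eq_one hq)
  rw [deltaTilde_eq_renyiGap p q hα₁ ha.le hn, deltaTilde_eq_renyiGap p q hα₁ ha.le hk]
  exact sub_le_sub_right (monotoneOn_renyiGap hq hc hqc hα₀ hα₁
    (mem_Ici.2 (by positivity)) (mem_Ici.2 (by positivity)) hnk) _

theorem deltaTilde_monotonicity_general {m : ℕ} (p q : Fin m → ℝ)
    (hq : IsProbDist q)
    (a : ℝ) (ha : 0 < a) (ha' : a < (m : ℝ) * ⨅ i, q i) (α : ℝ) :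
    (α < 1 → α ≠ 0 → MonotoneOn (deltaTilde p q a α) (Set.Ici 1)) ∧
    (α = 1 → ∀ n : ℕ, 1 ≤ n → deltaTilde p q a α n = deltaTilde p q a α 1) ∧
    (1 < α → AntitoneOn (deltaTilde p q a α) (Set.Ici 1)) := by
  have hm : (0 : ℝ) < m := by exact_mod_cast pos_of_sum_fin_eq_one hq.2
  have hqc : ∀ i, a / m < q i := fun i ↦ (div_lt_iff₀' hm).2 <|
    ha'.trans_le (mul_le_mul_of_nonneg_left (ciInf_le (Finite.bddBelow_range q) i) hm.le)
  have hle := deltaTilde_le_deltaTilde_of_rpow_le p hq.2 ha hqc (α := α)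
  refine ⟨fun hα₁ hα₀ n (hn : 1 ≤ n) k _ hnk ↦ ?_, fun hα₁ n hn ↦ ?_,
    fun hα₁ n (hn : 1 ≤ n) k _ hnk ↦ ?_⟩
  · exact hle hα₀ hα₁.ne (by omega) (by omega)
      (rpow_le_rpow (by positivity) (by exact_mod_cast hnk) (by linarith))
  · subst hα₁
    exact deltaTilde_one_eq p q a (by omega)
  · exact hle (by linarith) hα₁.ne' (by omega) (by omega)
      (rpow_le_rpow_of_nonpos (by positivity) (by exact_mod_cast hnk) (by linarith))

/-- With `q` full rank, `a ∈ (0, m·min_i q_i)`, `a_i := a/m` (and `p`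
full rank in case `α < 0`): `Δ̃_n^{(α)}` is increasing in `n` for finite `α < 1`, `α ≠ 0`;
constant in `n` for `α = 1`; and decreasing in `n` for finite `α > 1`. -/
theorem deltaTilde_monotonicity {m : ℕ} (p q : Fin m → ℝ)
    (hp : IsProbDist p) (hq : IsProbDist q) (hq_rank : ∀ i, q i ≠ 0)
    (a : ℝ) (ha : 0 < a) (ha' : a < (m : ℝ) * ⨅ i, q i) (α : ℝ)
    (hp_rank : α < 0 → ∀ i, p i ≠ 0) :
    (α < 1 → α ≠ 0 → MonotoneOn (deltaTilde p q a α) (Set.Ici 1)) ∧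
    (α = 1 → ∀ n : ℕ, 1 ≤ n → deltaTilde p q a α n = deltaTilde p q a α 1) ∧
    (1 < α → AntitoneOn (deltaTilde p q a α) (Set.Ici 1)) :=
  deltaTilde_monotonicity_general p q hq a ha ha' α
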